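/- Let R be an integral domain which is a ℚ-algebra, let a, b ∈ R, and let f = C a + (C b)·X ∈ R⟦X⟧ (the affine series a + bX). Then for every n ≥ 1: A_n(f) = (C a + (C b)·X) · (C b)^{n−1}. Consequently the flow of the linear autonomous equation δ_tΦ = a + bΦ is Φ_f = X + ∑_{n≥1} (a + bX)·b^{n−1}·T^n/n!. -/

import Mathlib

open PowerSeries

/-- The autonomous polynomials of a power series: `A_1(f) = f` and
`A_{n+1}(f) = f·δ(A_n(f))`.  Here `autPolyPS f m` is `A_{m+1}(f)`. -/
noncomputable def autPolyPS {R : Type*} [CommRing R] (f : PowerSeries R) :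
    ℕ → PowerSeries R
  | 0 => f
  | m + 1 => f * derivativeFun (autPolyPS f m)

/-- The flow `Φ_f = X + ∑_{n≥1} A_n(f)·T^n/n!` of `f ∈ R⟦X⟧`, as a power series in the time
variable `T` with coefficients in `R⟦X⟧`. -/
noncomputable def flowPS {R : Type*} [CommRing R] [Algebra ℚ R] (f : PowerSeries R) :
    PowerSeries (PowerSeries R) :=
  PowerSeries.mk fun n => if n = 0 then PowerSeries.X
    else PowerSeries.C (algebraMap ℚ R (1 / n.factorial)) * autPolyPS f (n - 1)

theorem autPolyPS_succ {R : Type*} [CommRing R] (f : PowerSeries R) (m : ℕ) :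
    autPolyPS f (m + 1) = f * d⁄dX R (autPolyPS f m) :=
  rfl

theorem derivative_C_add_C_mul_X {R : Type*} [CommRing R] (a b : R) :
    d⁄dX R (C a + C b * X) = C b := by
  simp

theorem autPolyPS_of_derivative_eq_C {R : Type*} [CommRing R] {f : PowerSeries R} {c : R}
    (hf : d⁄dX R f = C c) (m : ℕ) : autPolyPS f m = f * C c ^ m := by
  induction m with
  | zero => simp [autPolyPS]
  | succ m ih =>
    rw [autPolyPS_succ, ih, Derivation.leibniz, hf, ← map_pow, derivative_C, map_pow]
    simp only [smul_eq_mul, mul_zero, zero_add]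
    ring

theorem coeff_flowPS {R : Type*} [CommRing R] [Algebra ℚ R] (f : PowerSeries R) {n : ℕ}
    (hn : n ≠ 0) :
    coeff n (flowPS f) = C (algebraMap ℚ R (1 / n.factorial)) * autPolyPS f (n - 1) := by
  rw [flowPS, coeff_mk, if_neg hn]

theorem autPolyPS_affine_general {R : Type*} [CommRing R] [Algebra ℚ R] (a b : R) :
    (∀ n : ℕ, 1 ≤ n →
      autPolyPS (PowerSeries.C a + PowerSeries.C b * PowerSeries.X) (n - 1) =
        (PowerSeries.C a + PowerSeries.C b * PowerSeries.X) * PowerSeries.C b ^ (n - 1)) ∧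
    (∀ n : ℕ, 1 ≤ n →
      PowerSeries.coeff n
          (flowPS (PowerSeries.C a + PowerSeries.C b * PowerSeries.X)) =
        PowerSeries.C (algebraMap ℚ R (1 / n.factorial)) *
          ((PowerSeries.C a + PowerSeries.C b * PowerSeries.X) *
            PowerSeries.C b ^ (n - 1))) := by
  have hA := autPolyPS_of_derivative_eq_C (derivative_C_add_C_mul_X a b)
  exact ⟨fun n _ => hA (n - 1), fun n hn => by
    rw [coeff_flowPS _ (Nat.one_le_iff_ne_zero.mp hn), hA]⟩

/-- For an integral domain `R` which is a `ℚ`-algebra and `a, b ∈ R`, the autonomous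
polynomials of the affine series `f = a + bX` are `A_n(f) = (a + bX)·b^{n-1}` for `n ≥ 1`;
consequently the flow of `δ_tΦ = a + bΦ` is `X + ∑_{n≥1} (a+bX)·b^{n-1}·T^n/n!`. -/
theorem autPolyPS_affine {R : Type*} [CommRing R] [IsDomain R] [Algebra ℚ R] (a b : R) :
    (∀ n : ℕ, 1 ≤ n →
      autPolyPS (PowerSeries.C a + PowerSeries.C b * PowerSeries.X) (n - 1) =
        (PowerSeries.C a + PowerSeries.C b * PowerSeries.X) * PowerSeries.C b ^ (n - 1)) ∧
    (∀ n : ℕ, 1 ≤ n →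
      PowerSeries.coeff n
          (flowPS (PowerSeries.C a + PowerSeries.C b * PowerSeries.X)) =
        PowerSeries.C (algebraMap ℚ R (1 / n.factorial)) *
          ((PowerSeries.C a + PowerSeries.C b * PowerSeries.X) *
            PowerSeries.C b ^ (n - 1))) :=
  autPolyPS_affine_general a b
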